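/- Let p, e ∈ ℝ³ with e₃ > 0. Then (there exists t ∈ T with ‖t − e‖ < ‖t − p‖) if and only if it is not the case that (e₁ = p₁, e₂ = p₂, and e₃ ≥ |p₃|). (Lemma 1: the evader winning subspace of the one-pursuer game is the complement in the play half-space of the barrier point together with the pursuer winning ray.) -/

import Mathlib

/-!
For `t` in the plane `x₂ = 0`, `‖t - x‖² = ‖t - x'‖² + x₂²`, where `x'` is the projection of `x`
to the plane. If `e` and `p` have the same projection, the evader can only win through the
vertical offsets, i.e. iff `e₂ < |p₂|`. Otherwise, moving `t` along the line through the two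
projections, away from `p'`, makes `‖t - e'‖² - ‖t - p'‖²` arbitrarily negative, so the evader wins.
-/

theorem exists_dist_lineMap_sq_lt {E : Type*} [NormedAddCommGroup E] [NormedSpace ℝ E]
    {x y : E} (hxy : x ≠ y) (c : ℝ) :
    ∃ s : ℝ, dist (AffineMap.lineMap y x s) x ^ 2 < dist (AffineMap.lineMap y x s) y ^ 2 + c := by
  have hd : 0 < dist y x := dist_pos.2 hxy.symm
  refine ⟨1 - c / (2 * dist y x ^ 2), ?_⟩
  -- along the line, the difference of squared distances is `(1 - 2 s) * dist y x ^ 2`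
  rw [dist_lineMap_right, dist_lineMap_left, Real.norm_eq_abs, Real.norm_eq_abs, mul_pow,
    mul_pow, sq_abs, sq_abs]
  have : (1 - 2 * (1 - c / (2 * dist y x ^ 2))) * dist y x ^ 2 = c - dist y x ^ 2 := by
    field_simp
    ring
  linarith [pow_pos hd 2]

namespace EuclideanSpace

def horizontal (x : EuclideanSpace ℝ (Fin 3)) : EuclideanSpace ℝ (Fin 3) := !₂[x 0, x 1, 0]

@[simp]
theorem horizontal_apply_two (x : EuclideanSpace ℝ (Fin 3)) : horizontal x 2 = 0 := rfl

theorem horizontal_eq_horizontal_iff {x y : EuclideanSpace ℝ (Fin 3)} :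
    horizontal x = horizontal y ↔ x 0 = y 0 ∧ x 1 = y 1 := by
  simp [horizontal]

theorem dist_sq_eq_dist_horizontal_sq_add {t : EuclideanSpace ℝ (Fin 3)} (ht : t 2 = 0)
    (x : EuclideanSpace ℝ (Fin 3)) : dist t x ^ 2 = dist t (horizontal x) ^ 2 + x 2 ^ 2 := by
  simp only [dist_eq_norm, EuclideanSpace.real_norm_sq_eq, Fin.sum_univ_three]
  simp [horizontal, ht]

theorem dist_lt_dist_iff_of_apply_two_eq_zero {t : EuclideanSpace ℝ (Fin 3)} (ht : t 2 = 0)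
    (x y : EuclideanSpace ℝ (Fin 3)) :
    dist t x < dist t y ↔
      dist t (horizontal x) ^ 2 + x 2 ^ 2 < dist t (horizontal y) ^ 2 + y 2 ^ 2 := by
  rw [← dist_sq_eq_dist_horizontal_sq_add ht, ← dist_sq_eq_dist_horizontal_sq_add ht,
    sq_lt_sq₀ dist_nonneg dist_nonneg]

end EuclideanSpace

open EuclideanSpace

theorem one_pursuer_evader_winning (p e : EuclideanSpace ℝ (Fin 3)) (he : e 2 > 0) :
    (∃ t : EuclideanSpace ℝ (Fin 3), t 2 = 0 ∧ ‖t - e‖ < ‖t - p‖) ↔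
    ¬(e 0 = p 0 ∧ e 1 = p 1 ∧ e 2 ≥ |p 2|) := by
  simp only [← dist_eq_norm]
  constructor
  · rintro ⟨t, ht, hlt⟩ ⟨h0, h1, h2⟩
    rw [dist_lt_dist_iff_of_apply_two_eq_zero ht, horizontal_eq_horizontal_iff.2 ⟨h0, h1⟩] at hlt
    have : p 2 ^ 2 ≤ e 2 ^ 2 := sq_le_sq.2 (h2.trans (le_abs_self _))
    linarith
  · intro h
    by_cases hflat : horizontal e = horizontal p
    · obtain ⟨h0, h1⟩ := horizontal_eq_horizontal_iff.1 hflat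
      have h2 : e 2 < |p 2| := lt_of_not_ge fun h2 ↦ h ⟨h0, h1, h2⟩
      refine ⟨horizontal e, horizontal_apply_two e, ?_⟩
      rw [dist_lt_dist_iff_of_apply_two_eq_zero (horizontal_apply_two e), hflat, dist_self]
      have : e 2 ^ 2 < p 2 ^ 2 := sq_lt_sq.2 (by rwa [abs_of_pos he])
      linarith
    · obtain ⟨s, hs⟩ := exists_dist_lineMap_sq_lt hflat (p 2 ^ 2 - e 2 ^ 2)
      have ht : AffineMap.lineMap (horizontal p) (horizontal e) s 2 = 0 := by
        simp [AffineMap.lineMap_apply_module]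
      refine ⟨_, ht, ?_⟩
      rw [dist_lt_dist_iff_of_apply_two_eq_zero ht]
      linarith
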